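/- For all s, t ≥ 1 and cycle lengths l_1, ..., l_{t−1} ≥ 3, the graphs K_1 ∨ (C_3 ∪ C_{l_1} ∪ ... ∪ C_{l_{t−1}} ∪ s K_1) and K_1 ∨ (K_{1,3} ∪ C_{l_1} ∪ ... ∪ C_{l_{t−1}} ∪ (s−1) K_1) are non-isomorphic but have the same signless Laplacian spectrum (with multiplicities). -/

import Mathlib

open SimpleGraph Matrix Finset
attribute [local instance] Classical.propDecidable
set_option linter.unnecessarySimpa false

/-- The signless Laplacian matrix `Q(G) = D(G) + A(G)`. -/
noncomputable def signlessLaplacian {V : Type*} [Fintype V] (G : SimpleGraph V) :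
    Matrix V V ℝ :=
  Matrix.diagonal (fun v => (G.degree v : ℝ)) + G.adjMatrix ℝ

/-- The multiset of eigenvalues of a Hermitian real matrix. -/
noncomputable def eigMultiset {V : Type*} [Fintype V] [DecidableEq V]
    {M : Matrix V V ℝ} (hM : M.IsHermitian) : Multiset ℝ :=
  Finset.univ.val.map hM.eigenvalues

/-- The `i`-th largest eigenvalue (0-indexed) of a Hermitian real matrix. -/
noncomputable def ithEig {V : Type*} [Fintype V] [DecidableEq V]
    {M : Matrix V V ℝ} (hM : M.IsHermitian) (i : ℕ) : ℝ :=
  ((eigMultiset hM).sort (· ≥ ·)).getD i 0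

/-- The join `G ∨ H` of two graphs. -/
def joinG {α β : Type*} (G : SimpleGraph α) (H : SimpleGraph β) : SimpleGraph (α ⊕ β) where
  Adj x y :=
    match x, y with
    | Sum.inl a, Sum.inl b => G.Adj a b
    | Sum.inr a, Sum.inr b => H.Adj a b
    | Sum.inl _, Sum.inr _ => True
    | Sum.inr _, Sum.inl _ => True
  symm := ⟨by
    rintro (a | a) (b | b) h <;> simp_all <;> exact h.symm⟩
  loopless := ⟨by rintro (a | a) h <;> simp_all⟩

/-- The disjoint union `G ∪ H` of two graphs. -/
def sumG {α β : Type*} (G : SimpleGraph α) (H : SimpleGraph β) : SimpleGraph (α ⊕ β) where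
  Adj x y :=
    match x, y with
    | Sum.inl a, Sum.inl b => G.Adj a b
    | Sum.inr a, Sum.inr b => H.Adj a b
    | _, _ => False
  symm := ⟨by
    rintro (a | a) (b | b) h <;> simp_all <;> exact h.symm⟩
  loopless := ⟨by rintro (a | a) h <;> simp_all⟩

/-- The disjoint union of cycles `C_{l 0} ∪ ⋯ ∪ C_{l (t-1)}`. -/
def cyclesUnion (t : ℕ) (l : Fin t → ℕ) : SimpleGraph (Σ i : Fin t, Fin (l i)) where
  Adj x y := ∃ h : x.1 = y.1, (cycleGraph (l y.1)).Adj (h ▸ x.2) y.2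
  symm := ⟨by
    rintro ⟨i, a⟩ ⟨j, b⟩ ⟨h, hadj⟩
    dsimp only at h hadj ⊢
    subst h
    exact ⟨rfl, hadj.symm⟩⟩
  loopless := ⟨by
    rintro ⟨i, a⟩ ⟨h, hadj⟩
    dsimp only at h hadj
    rw [eq_self_iff_true] at h
    exact (cycleGraph (l i)).loopless.irrefl a (by simpa using hadj)⟩

/-!
Match the triangle vertices of `C₃ ∪ K₁` with the leaves of `K_{1,3}` and the isolated vertex
with the centre. The reflection `P` in the hyperplane orthogonal to `w = (1, 1, 1, -3)` satisfies
`Q(C₃ ∪ K₁) P = P Q(K_{1,3})`, and since `w` is orthogonal to the all-ones vector, every row and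
column of `P` sums to `1`. Conjugacy by an invertible matrix with unit row and column sums
survives a disjoint union with a common graph (extend `P` by the identity) and a join with a
common graph (the all-ones blocks of the join are fixed), so the two joins have conjugate
signless Laplacians. They are not isomorphic: a leaf of `K_{1,3}` has degree `2` in the second
graph, while every vertex of the first has degree `1` or at least `3`.
-/
variable {α β γ : Type*}

section Adjacency

variable {G : SimpleGraph α} {H : SimpleGraph β}

@[simp] lemma sumG_adj_inl_inl {a b : α} : (sumG G H).Adj (.inl a) (.inl b) ↔ G.Adj a b := .rfl
@[simp] lemma sumG_adj_inr_inr {a b : β} : (sumG G H).Adj (.inr a) (.inr b) ↔ H.Adj a b := .rfl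
@[simp] lemma not_sumG_adj_inl_inr {a : α} {b : β} : ¬ (sumG G H).Adj (.inl a) (.inr b) := id
@[simp] lemma not_sumG_adj_inr_inl {a : α} {b : β} : ¬ (sumG G H).Adj (.inr b) (.inl a) := id
@[simp] lemma joinG_adj_inl_inl {a b : α} : (joinG G H).Adj (.inl a) (.inl b) ↔ G.Adj a b := .rfl
@[simp] lemma joinG_adj_inr_inr {a b : β} : (joinG G H).Adj (.inr a) (.inr b) ↔ H.Adj a b := .rfl
@[simp] lemma joinG_adj_inl_inr {a : α} {b : β} : (joinG G H).Adj (.inl a) (.inr b) := trivial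
@[simp] lemma joinG_adj_inr_inl {a : α} {b : β} : (joinG G H).Adj (.inr b) (.inl a) := trivial

lemma completeBipartiteGraph_eq_joinG_bot : completeBipartiteGraph α β = joinG ⊥ ⊥ := by
  ext (v | v) (w | w) <;> simp

end Adjacency

section Degree

variable [Fintype α] [Fintype β] {G : SimpleGraph α} {H : SimpleGraph β}

lemma degree_eq_sum_ite {V : Type*} [Fintype V] (G : SimpleGraph V) (v : V)
    [Fintype (G.neighborSet v)] : G.degree v = ∑ w, if G.Adj v w then 1 else 0 := by
  rw [← card_neighborFinset_eq_degree, ← Finset.card_filter]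
  congr 1
  ext w
  simp

lemma degree_sumG_inl (a : α) : (sumG G H).degree (.inl a) = G.degree a := by
  rw [degree_eq_sum_ite, degree_eq_sum_ite, Fintype.sum_sum_type]
  simp

lemma degree_sumG_inr (b : β) : (sumG G H).degree (.inr b) = H.degree b := by
  rw [degree_eq_sum_ite, degree_eq_sum_ite, Fintype.sum_sum_type]
  simp

lemma degree_joinG_inl (a : α) :
    (joinG G H).degree (.inl a) = G.degree a + Fintype.card β := by
  rw [degree_eq_sum_ite, degree_eq_sum_ite, Fintype.sum_sum_type]
  simp

lemma degree_joinG_inr (b : β) :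
    (joinG G H).degree (.inr b) = H.degree b + Fintype.card α := by
  rw [degree_eq_sum_ite, degree_eq_sum_ite, Fintype.sum_sum_type, add_comm]
  simp

lemma degree_completeBipartiteGraph_inr (b : β) :
    (completeBipartiteGraph α β).degree (.inr b) = Fintype.card α := by
  rw [degree_eq_sum_ite, Fintype.sum_sum_type]
  simp

lemma cycleGraph_degree_eq_two {n : ℕ} (hn : 3 ≤ n) (v : Fin n)
    [Fintype ((cycleGraph n).neighborSet v)] :
    (cycleGraph n).degree v = 2 := by
  obtain ⟨k, rfl⟩ : ∃ k, n = k + 3 := ⟨n - 3, by omega⟩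
  convert cycleGraph_degree_three_le

lemma cyclesUnion_adj_mk_mk {t : ℕ} {l : Fin t → ℕ} {i : Fin t} {a b : Fin (l i)} :
    (cyclesUnion t l).Adj ⟨i, a⟩ ⟨i, b⟩ ↔ (cycleGraph (l i)).Adj a b :=
  ⟨fun ⟨_, h⟩ => h, fun h => ⟨rfl, h⟩⟩

lemma cyclesUnion_isRegularOfDegree_two {t : ℕ} {l : Fin t → ℕ} (hl : ∀ i, 3 ≤ l i) :
    (cyclesUnion t l).IsRegularOfDegree 2 := by
  rintro ⟨i, a⟩
  rw [degree_eq_sum_ite, ← Finset.univ_sigma_univ, Finset.sum_sigma, Finset.sum_eq_single i,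
    ← cycleGraph_degree_eq_two (hl i) a, degree_eq_sum_ite]
  · simp_rw [cyclesUnion_adj_mk_mk]
    congr!
  · intro j _ hj
    exact Finset.sum_eq_zero fun b _ => if_neg fun ⟨h, _⟩ => hj h.symm
  · simp

end Degree

section SignlessLaplacian

variable [Fintype α] [Fintype β] {G : SimpleGraph α} {H : SimpleGraph β}

lemma signlessLaplacian_apply {V : Type*} [Fintype V] (G : SimpleGraph V) (v w : V) :
    signlessLaplacian G v w =
      (if v = w then (G.degree v : ℝ) else 0) + if G.Adj v w then 1 else 0 := by
  simp [signlessLaplacian, diagonal_apply]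

lemma signlessLaplacian_bot : signlessLaplacian (⊥ : SimpleGraph α) = 0 := by
  ext v w
  simp [signlessLaplacian_apply]

lemma signlessLaplacian_sumG :
    signlessLaplacian (sumG G H) = fromBlocks (signlessLaplacian G) 0 0 (signlessLaplacian H) := by
  ext (v | v) (w | w) <;> simp [signlessLaplacian_apply, degree_sumG_inl, degree_sumG_inr]

lemma signlessLaplacian_joinG :
    signlessLaplacian (joinG G H) =
      fromBlocks (signlessLaplacian G + (Fintype.card β : ℝ) • 1) (replicateRow α 1)
        (replicateCol α 1) (signlessLaplacian H + (Fintype.card α : ℝ) • 1) := by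
  ext (v | v) (w | w) <;>
    simp [signlessLaplacian_apply, degree_joinG_inl, degree_joinG_inr, one_apply] <;>
    split_ifs <;> ring

lemma signlessLaplacian_cycleGraph_three :
    signlessLaplacian (cycleGraph 3) = 1 + of fun _ _ => 1 := by
  ext v w
  rw [signlessLaplacian_apply, cycleGraph_degree_eq_two le_rfl, cycleGraph_three_eq_top]
  by_cases h : v = w <;> norm_num [h, one_apply]

end SignlessLaplacian

def SignlessSimilar [Fintype α] [Fintype β] [DecidableEq α] [DecidableEq β]
    (G : SimpleGraph α) (H : SimpleGraph β) : Prop :=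
  ∃ (P : Matrix α β ℝ) (P' : Matrix β α ℝ),
    P * P' = 1 ∧ P' * P = 1 ∧ P *ᵥ 1 = 1 ∧ 1 ᵥ* P = 1 ∧
    signlessLaplacian G * P = P * signlessLaplacian H

namespace SignlessSimilar

variable [Fintype α] [Fintype β] [Fintype γ] [DecidableEq α] [DecidableEq β] [DecidableEq γ]
  {G : SimpleGraph α} {H : SimpleGraph β}

lemma card_eq (h : SignlessSimilar G H) : Fintype.card α = Fintype.card β := by
  obtain ⟨P, P', hPP', hP'P, -⟩ := h
  have htrace := congrArg trace hPP'
  rw [trace_mul_comm, hP'P, trace_one, trace_one] at htrace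
  exact_mod_cast htrace.symm

lemma charpoly_eq (h : SignlessSimilar G H) :
    (signlessLaplacian G).charpoly = (signlessLaplacian H).charpoly := by
  have hcard := h.card_eq
  obtain ⟨P, P', hPP', hP'P, -, -, hQ⟩ := h
  have hconj : P * (signlessLaplacian H * P') = signlessLaplacian G := by
    rw [← Matrix.mul_assoc, ← hQ, Matrix.mul_assoc, hPP', Matrix.mul_one]
  have hcomm := charpoly_mul_comm' P (signlessLaplacian H * P')
  rw [hconj, Matrix.mul_assoc, hP'P, Matrix.mul_one, hcard] at hcomm
  exact (Polynomial.isRegular_X_pow _).left hcomm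

lemma of_iso (φ : G ≃g H) : SignlessSimilar G H := by
  refine ⟨φ.toEquiv.toPEquiv.toMatrix, φ.toEquiv.symm.toPEquiv.toMatrix, ?_, ?_, ?_, ?_, ?_⟩
  · rw [← PEquiv.toMatrix_trans, ← Equiv.toPEquiv_trans, Equiv.self_trans_symm]
    simp
  · rw [← PEquiv.toMatrix_trans, ← Equiv.toPEquiv_trans, Equiv.symm_trans_self]
    simp
  · rw [PEquiv.toMatrix_toPEquiv_mulVec]
    rfl
  · rw [PEquiv.vecMul_toMatrix_toPEquiv]
    rfl
  · rw [PEquiv.toMatrix_toPEquiv_mul, PEquiv.mul_toMatrix_toPEquiv]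
    ext a b
    obtain ⟨c, rfl⟩ := φ.toEquiv.surjective b
    rw [submatrix_apply, submatrix_apply, Equiv.symm_apply_apply]
    simp [signlessLaplacian_apply, φ.map_adj_iff]

lemma trans {K : SimpleGraph γ} (h₁ : SignlessSimilar G H) (h₂ : SignlessSimilar H K) :
    SignlessSimilar G K := by
  obtain ⟨P, P', hPP', hP'P, hP, hP₁, hQ⟩ := h₁
  obtain ⟨R, R', hRR', hR'R, hR, hR₁, hQ'⟩ := h₂
  refine ⟨P * R, R' * P', ?_, ?_, ?_, ?_, ?_⟩
  · rw [Matrix.mul_assoc, ← Matrix.mul_assoc R, hRR', Matrix.one_mul, hPP']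
  · rw [Matrix.mul_assoc, ← Matrix.mul_assoc P', hP'P, Matrix.one_mul, hR'R]
  · rw [← mulVec_mulVec, hR, hP]
  · rw [← vecMul_vecMul, hP₁, hR₁]
  · rw [← Matrix.mul_assoc, hQ, Matrix.mul_assoc, hQ', Matrix.mul_assoc]

lemma sumG_left {G' : SimpleGraph β} (h : SignlessSimilar G G') (H : SimpleGraph γ) :
    SignlessSimilar (sumG G H) (sumG G' H) := by
  obtain ⟨P, P', hPP', hP'P, hP, hP₁, hQ⟩ := h
  refine ⟨fromBlocks P 0 0 1, fromBlocks P' 0 0 1, ?_, ?_, ?_, ?_, ?_⟩ <;>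
    simp [fromBlocks_multiply, fromBlocks_mulVec, vecMul_fromBlocks, signlessLaplacian_sumG,
      fromBlocks_one, *]

lemma joinG_right {G' : SimpleGraph β} (h : SignlessSimilar G G') (K : SimpleGraph γ) :
    SignlessSimilar (joinG K G) (joinG K G') := by
  have hcard := h.card_eq
  obtain ⟨P, P', hPP', hP'P, hP, hP₁, hQ⟩ := h
  refine ⟨fromBlocks 1 0 0 P, fromBlocks 1 0 0 P', ?_, ?_, ?_, ?_, ?_⟩
  · simp [fromBlocks_multiply, fromBlocks_one, *]
  · simp [fromBlocks_multiply, fromBlocks_one, *]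
  · simp [fromBlocks_mulVec, *]
  · simp [vecMul_fromBlocks, *]
  · simp [fromBlocks_multiply, signlessLaplacian_joinG, ← replicateRow_vecMul,
      ← replicateCol_mulVec, Matrix.add_mul, Matrix.mul_add, *]

end SignlessSimilar

/-- The reflection `1 - w wᵀ / 6` for `w = (1, 1, 1, -3)`: rows indexed by `C₃ ∪ K₁`, columns by
`K_{1,3}`, the isolated vertex corresponding to the centre. -/
noncomputable def triangleStarReflection : Matrix (Fin 3 ⊕ Unit) (Unit ⊕ Fin 3) ℝ :=
  fromBlocks (of fun _ _ => 1 / 2) (1 - of fun _ _ => 1 / 6)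
    (of fun _ _ => -1 / 2) (of fun _ _ => 1 / 2)

lemma signlessSimilar_triangle_sumG_bot_star :
    SignlessSimilar (sumG (cycleGraph 3) (⊥ : SimpleGraph Unit))
      (completeBipartiteGraph Unit (Fin 3)) := by
  refine ⟨triangleStarReflection, triangleStarReflectionᵀ, ?_, ?_, ?_, ?_, ?_⟩ <;>
    simp only [signlessLaplacian_sumG, completeBipartiteGraph_eq_joinG_bot,
      signlessLaplacian_joinG, signlessLaplacian_bot, signlessLaplacian_cycleGraph_three,
      triangleStarReflection]
  all_goals first
    | ext (i | i) (j | j) <;> fin_cases i <;> fin_cases j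
    | ext (i | i) <;> fin_cases i
  all_goals simp [mul_apply, mulVec, vecMul, dotProduct, Fintype.sum_sum_type, Fin.sum_univ_three,
    one_apply]
  all_goals norm_num

def sumGBotSuccIso (C : SimpleGraph α) (H : SimpleGraph β) (k : ℕ) :
    sumG (sumG C H) (⊥ : SimpleGraph (Fin (k + 1))) ≃g
      sumG (sumG (sumG C (⊥ : SimpleGraph Unit)) H) (⊥ : SimpleGraph (Fin k)) where
  toFun := Sum.elim (Sum.elim (.inl ∘ .inl ∘ .inl) (.inl ∘ .inr))
    (Fin.cases (.inl (.inl (.inr ()))) .inr)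
  invFun := Sum.elim (Sum.elim (Sum.elim (.inl ∘ .inl) fun _ => .inr 0) (.inl ∘ .inr))
    (.inr ∘ Fin.succ)
  left_inv := by
    rintro ((a | b) | i)
    · rfl
    · rfl
    · cases i using Fin.cases <;> rfl
  right_inv := by rintro (((a | u) | b) | j) <;> rfl
  map_rel_iff' := by
    rintro ((a | b) | i) ((a' | b') | i') <;>
      (try cases i using Fin.cases) <;> (try cases i' using Fin.cases) <;> simp

section NonIsomorphic

variable [Fintype γ] {H : SimpleGraph γ}

lemma degree_joinG_triangle_ne_two (hH : H.IsRegularOfDegree 2) (s : ℕ)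
    (v : Unit ⊕ ((Fin 3 ⊕ γ) ⊕ Fin s)) :
    (joinG ⊥ (sumG (sumG (cycleGraph 3) H) ⊥)).degree v ≠ 2 := by
  rcases v with u | ((a | c) | i) <;>
    simp [degree_joinG_inl, degree_joinG_inr, degree_sumG_inl, degree_sumG_inr,
      cycleGraph_degree_eq_two, hH.degree_eq]
  omega

lemma degree_joinG_star_leaf (s : ℕ) (k : Fin 3) :
    (joinG (⊥ : SimpleGraph Unit)
      (sumG (sumG (completeBipartiteGraph Unit (Fin 3)) H) (⊥ : SimpleGraph (Fin s)))).degree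
        (.inr (.inl (.inl (.inr k)))) = 2 := by
  simp [degree_joinG_inr, degree_sumG_inl, degree_completeBipartiteGraph_inr]

end NonIsomorphic

theorem cospectral_mates (s t' : ℕ) (hs : 1 ≤ s)
    (l : Fin t' → ℕ) (hl : ∀ i, 3 ≤ l i) :
    let G1 := joinG (⊥ : SimpleGraph Unit)
      (sumG (sumG (cycleGraph 3) (cyclesUnion t' l)) (⊥ : SimpleGraph (Fin s)))
    let G2 := joinG (⊥ : SimpleGraph Unit)
      (sumG (sumG (completeBipartiteGraph Unit (Fin 3)) (cyclesUnion t' l))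
        (⊥ : SimpleGraph (Fin (s - 1))))
    ¬ Nonempty (G1 ≃g G2) ∧
      (signlessLaplacian G1).charpoly = (signlessLaplacian G2).charpoly := by
  intro G1 G2
  refine ⟨fun ⟨φ⟩ => ?_, ?_⟩
  · have hleaf :=
      (φ.symm.degree_eq _).trans (degree_joinG_star_leaf (H := cyclesUnion t' l) (s - 1) 0)
    exact degree_joinG_triangle_ne_two (cyclesUnion_isRegularOfDegree_two hl) s _ hleaf
  · obtain ⟨k, rfl⟩ : ∃ k, s = k + 1 := ⟨s - 1, by omega⟩
    exact SignlessSimilar.charpoly_eq <| SignlessSimilar.joinG_right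
      ((SignlessSimilar.of_iso (sumGBotSuccIso _ _ k)).trans
        ((signlessSimilar_triangle_sumG_bot_star.sumG_left _).sumG_left _)) _
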